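/- Consider the A-CODER iterates with x_0 ∈ dom(g) an arbitrary initial point. Then for all k ≥ 1 and all u ∈ dom(g): f̄(y_k) − f̄(u) + (3(1 + A_{k−1}γ)/(10 A_k))‖u − v_k‖² ≤ ‖u − x_0‖²/(2 A_k). In particular, if x* = argmin_x f̄(x) exists, then f̄(y_k) − f̄(x*) ≤ ‖x* − x_0‖²/(2 A_k). -/

import Mathlib

/-!
The proof runs through the estimate sequence
`ψ_k(u) = ½‖u - x₀‖² + Σ_{i ≤ k} a_i (f(x_i) + ⟪q_i, u - x_i⟫) + A_k g(u)`,
which `v_k` minimizes and which is `(1 + A_k γ)`-strongly convex. From above, convexity of `f`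
bounds `ψ_k(u)` by `A_k f̄(u) + ½‖u - x₀‖²` plus the errors `a_i ⟪q_i - ∇f(x_i), u - x_i⟫`.
From below, an induction using the step-size rule and the descent lemma
`f(y) ≤ f(x) + ⟪∇f(x), y - x⟫ + (L/2)‖y - x‖²` (this is where `L = √(2‖Q̃‖)` comes from) bounds
`ψ_k(v_k)` by `A_k f̄(y_k)` plus the dissipation `(3/10) Σ_i (1 + A_{i-1} γ)‖v_i - v_{i-1}‖²`.
Thanks to the extrapolation in `q_k` the errors telescope into terms
`a_i ⟪∇f(x_i) - p_i, v_i - v_{i+1}⟫`; the block-Lipschitz condition bounds `‖∇f(x_i) - p_i‖` by a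
multiple of `‖y_i - x_i‖`, hence of `‖v_i - v_{i-1}‖`, and Young's inequality absorbs the errors
into the dissipation.
-/

noncomputable section
open MeasureTheory Finset Set RealInnerProductSpace

abbrev Euc (d : ℕ) := EuclideanSpace ℝ (Fin d)

def blockMask {d m : ℕ} (blk : Fin d → Fin m) (j : Fin m) (z : Euc d) : Euc d :=
  (EuclideanSpace.equiv (Fin d) ℝ).symm fun i => if blk i = j then z i else 0

def blockCombine {d m : ℕ} (blk : Fin d → Fin m) (j : ℕ) (x y : Euc d) : Euc d :=
  (EuclideanSpace.equiv (Fin d) ℝ).symm fun i => if (blk i : ℕ) + 1 ≤ j then x i else y i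

def quadForm {d : ℕ} (Q : Matrix (Fin d) (Fin d) ℝ) (z : Euc d) : ℝ :=
  ∑ i, ∑ i', Q i i' * z i * z i'

def keepGE {d m : ℕ} (blk : Fin d → Fin m) (j : ℕ) (Q : Matrix (Fin d) (Fin d) ℝ) :
    Matrix (Fin d) (Fin d) ℝ :=
  Matrix.of fun i i' => if j ≤ (blk i : ℕ) + 1 ∧ j ≤ (blk i' : ℕ) + 1 then Q i i' else 0

def Qtilde {d m : ℕ} (blk : Fin d → Fin m) (Q : Fin m → Matrix (Fin d) (Fin d) ℝ) :
    Matrix (Fin d) (Fin d) ℝ :=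
  ∑ j : Fin m, (keepGE blk ((j : ℕ) + 1) (Q j) + keepGE blk ((j : ℕ) + 2) (Q j))

def specNorm {d : ℕ} (Q : Matrix (Fin d) (Fin d) ℝ) : ℝ :=
  ‖Matrix.toEuclideanCLM (𝕜 := ℝ) Q‖

def bigL {d m : ℕ} (blk : Fin d → Fin m) (Q : Fin m → Matrix (Fin d) (Fin d) ℝ) : ℝ :=
  Real.sqrt (2 * specNorm (Qtilde blk Q))

def BlockLip {d m : ℕ} (blk : Fin d → Fin m) (f : Euc d → ℝ)
    (Q : Fin m → Matrix (Fin d) (Fin d) ℝ) : Prop :=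
  ∀ (j : Fin m) (x y : Euc d),
    ‖blockMask blk j (gradient f x) - blockMask blk j (gradient f y)‖ ^ 2 ≤
      quadForm (Q j) (x - y)

def SubgradStrongConvex {d : ℕ} (γ : ℝ) (g : Euc d → ℝ) : Prop :=
  ∀ x y s : Euc d, (∀ z, g x + ⟪s, z - x⟫ ≤ g z) →
    g x + ⟪s, y - x⟫ + γ / 2 * ‖y - x‖ ^ 2 ≤ g y

/-- The A-CODER iterates (Algorithm 1), encoded via their characterizing properties.
The prox step is encoded as minimization of the (block-separable) objective. -/
structure ACoder (d m : ℕ) (blk : Fin d → Fin m) (f g : Euc d → ℝ)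
    (gj : Fin m → Euc d → ℝ) (Q : Fin m → Matrix (Fin d) (Fin d) ℝ) (γ : ℝ) where
  x0 : Euc d
  a : ℕ → ℝ
  A : ℕ → ℝ
  x : ℕ → Euc d
  v : ℕ → Euc d
  y : ℕ → Euc d
  p : ℕ → Euc d
  q : ℕ → Euc d
  hmono : Monotone blk
  hsurj : Function.Surjective blk
  hpsd : ∀ j, (Q j).PosSemidef
  hLpos : 0 < bigL blk Q
  hfconv : ConvexOn ℝ Set.univ f
  hfdiff : Differentiable ℝ f
  hflip : BlockLip blk f Q
  hγ : 0 ≤ γ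
  hgconv : ConvexOn ℝ Set.univ g
  hgsc : SubgradStrongConvex γ g
  hgsep : ∀ z, g z = ∑ j, gj j z
  hgjblock : ∀ j u u', blockMask blk j u = blockMask blk j u' → gj j u = gj j u'
  hgjconv : ∀ j, ConvexOn ℝ Set.univ (gj j)
  hx0 : x 0 = x0
  hv0 : v 0 = x0
  hy0 : y 0 = x0
  hp0 : p 0 = gradient f x0
  ha0 : a 0 = 0
  hA0 : A 0 = 0
  hapos : ∀ k, 1 ≤ k → 0 < a k
  hstep : ∀ k, 1 ≤ k → a k ^ 2 / A k ≤ 2 * (1 + A (k - 1) * γ) / (5 * bigL blk Q)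
  hA : ∀ k, 1 ≤ k → A k = A (k - 1) + a k
  hx : ∀ k, 1 ≤ k → x k = (A (k - 1) / A k) • y (k - 1) + (a k / A k) • v (k - 1)
  hp : ∀ k, 1 ≤ k → ∀ j, blockMask blk j (p k) =
      blockMask blk j (gradient f (blockCombine blk ((j : ℕ) + 1) (x k) (y k)))
  hq : ∀ k, 1 ≤ k →
      q k = p k + (a (k - 1) / a k) • (gradient f (x (k - 1)) - p (k - 1))
  hv : ∀ k, 1 ≤ k → IsMinOn
      (fun u => A k * g u + ‖u - (x0 - ∑ i ∈ Finset.Icc 1 k, a i • q i)‖ ^ 2 / 2)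
      Set.univ (v k)
  hy : ∀ k, 1 ≤ k → y k = (A (k - 1) / A k) • y (k - 1) + (a k / A k) • v k


open Filter Topology

section Blocks

variable {d m : ℕ} (blk : Fin d → Fin m)

/-- The restriction of `z` to `S^t ∪ … ∪ S^m` (the paper's blocks are `1`-indexed, `blk` is
`0`-indexed), i.e. the vector counterpart of `keepGE blk t`. -/
def maskGE (t : ℕ) (z : Euc d) : Euc d :=
  (EuclideanSpace.equiv (Fin d) ℝ).symm fun i => if t ≤ (blk i : ℕ) + 1 then z i else 0

variable {blk}

@[simp] lemma blockMask_apply (j : Fin m) (z : Euc d) (i : Fin d) :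
    blockMask blk j z i = if blk i = j then z i else 0 := rfl

@[simp] lemma maskGE_apply (t : ℕ) (z : Euc d) (i : Fin d) :
    maskGE blk t z i = if t ≤ (blk i : ℕ) + 1 then z i else 0 := rfl

@[simp] lemma blockCombine_apply (t : ℕ) (x y : Euc d) (i : Fin d) :
    blockCombine blk t x y i = if (blk i : ℕ) + 1 ≤ t then x i else y i := rfl

lemma blockMask_sub (j : Fin m) (a b : Euc d) :
    blockMask blk j (a - b) = blockMask blk j a - blockMask blk j b := by
  ext i; by_cases h : blk i = j <;> simp [h]

lemma sum_blockMask (z : Euc d) : ∑ j : Fin m, blockMask blk j z = z := by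
  ext i
  simp [WithLp.ofLp_sum]

lemma inner_blockMask_right (j : Fin m) (a b : Euc d) :
    ⟪a, blockMask blk j b⟫ = ⟪blockMask blk j a, blockMask blk j b⟫ := by
  simp only [PiLp.inner_apply, blockMask_apply]
  refine Finset.sum_congr rfl fun i _ => ?_
  split_ifs <;> simp

lemma norm_sq_eq_sum_norm_sq_blockMask (z : Euc d) :
    ‖z‖ ^ 2 = ∑ j : Fin m, ‖blockMask blk j z‖ ^ 2 := by
  simp only [← real_inner_self_eq_norm_sq]
  nth_rw 1 [← sum_blockMask (blk := blk) z]
  rw [sum_inner]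
  refine Finset.sum_congr rfl fun j _ => ?_
  rw [real_inner_comm, inner_blockMask_right]

lemma blockCombine_sub_left (t : ℕ) (x y : Euc d) :
    blockCombine blk t x y - x = maskGE blk (t + 1) (y - x) := by
  ext i
  simp only [PiLp.sub_apply, blockCombine_apply, maskGE_apply]
  split_ifs <;> first | omega | ring

lemma maskGE_add_blockMask (j : Fin m) (z : Euc d) :
    maskGE blk ((j : ℕ) + 2) z + blockMask blk j z = maskGE blk ((j : ℕ) + 1) z := by
  ext i
  simp only [PiLp.add_apply, maskGE_apply, blockMask_apply, Fin.ext_iff]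
  split_ifs <;> first | omega | ring

lemma blockCombine_zero (x y : Euc d) : blockCombine blk 0 x y = y := by
  ext i; simp

lemma blockCombine_self_card (x y : Euc d) : blockCombine blk m x y = x := by
  ext i; simp [Nat.succ_le_of_lt (blk i).isLt]

lemma blockCombine_succ_add_blockMask (j : Fin m) (x y : Euc d) :
    blockCombine blk ((j : ℕ) + 1) x y + blockMask blk j (y - x) = blockCombine blk j x y := by
  ext i
  simp only [PiLp.add_apply, blockCombine_apply, blockMask_apply, PiLp.sub_apply, Fin.ext_iff]
  split_ifs <;> first | omega | ring

end Blocks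

section QuadForm

variable {d m : ℕ}

lemma quadForm_eq_inner (Q : Matrix (Fin d) (Fin d) ℝ) (z : Euc d) :
    quadForm Q z = ⟪z, Matrix.toEuclideanCLM (𝕜 := ℝ) Q z⟫ := by
  simp only [Matrix.inner_toEuclideanCLM, quadForm, dotProduct, Matrix.mulVec, Finset.mul_sum]
  exact Finset.sum_congr rfl fun i _ => Finset.sum_congr rfl fun i' _ => by ring

lemma quadForm_nonneg {Q : Matrix (Fin d) (Fin d) ℝ} (hQ : Q.PosSemidef) (z : Euc d) :
    0 ≤ quadForm Q z := by
  simpa [quadForm_eq_inner, Matrix.inner_toEuclideanCLM] using hQ.dotProduct_mulVec_nonneg z.ofLp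

lemma quadForm_le_specNorm (Q : Matrix (Fin d) (Fin d) ℝ) (z : Euc d) :
    quadForm Q z ≤ specNorm Q * ‖z‖ ^ 2 :=
  calc quadForm Q z ≤ ‖z‖ * ‖Matrix.toEuclideanCLM (𝕜 := ℝ) Q z‖ := by
        rw [quadForm_eq_inner]; exact real_inner_le_norm _ _
    _ ≤ ‖z‖ * (specNorm Q * ‖z‖) := by gcongr; exact ContinuousLinearMap.le_opNorm _ _
    _ = specNorm Q * ‖z‖ ^ 2 := by ring

lemma quadForm_neg (Q : Matrix (Fin d) (Fin d) ℝ) (z : Euc d) :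
    quadForm Q (-z) = quadForm Q z := by
  simp [quadForm_eq_inner]

lemma quadForm_sum {ι : Type*} (s : Finset ι) (M : ι → Matrix (Fin d) (Fin d) ℝ) (z : Euc d) :
    quadForm (∑ j ∈ s, M j) z = ∑ j ∈ s, quadForm (M j) z := by
  simp [quadForm_eq_inner, map_sum, inner_sum]

lemma quadForm_add (M N : Matrix (Fin d) (Fin d) ℝ) (z : Euc d) :
    quadForm (M + N) z = quadForm M z + quadForm N z := by
  simp [quadForm_eq_inner, map_add, inner_add_right]

lemma quadForm_keepGE (blk : Fin d → Fin m) (t : ℕ) (Q : Matrix (Fin d) (Fin d) ℝ) (z : Euc d) :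
    quadForm (keepGE blk t Q) z = quadForm Q (maskGE blk t z) := by
  simp only [quadForm, keepGE, Matrix.of_apply, maskGE_apply]
  refine Finset.sum_congr rfl fun i _ => Finset.sum_congr rfl fun i' _ => ?_
  split_ifs <;> simp_all

lemma quadForm_Qtilde (blk : Fin d → Fin m) (Q : Fin m → Matrix (Fin d) (Fin d) ℝ) (z : Euc d) :
    quadForm (Qtilde blk Q) z = ∑ j : Fin m,
      (quadForm (Q j) (maskGE blk ((j : ℕ) + 1) z) +
        quadForm (Q j) (maskGE blk ((j : ℕ) + 2) z)) := by
  simp only [Qtilde, quadForm_sum, quadForm_add, quadForm_keepGE]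

lemma quadForm_combo_add_mul_sub (Q : Matrix (Fin d) (Fin d) ℝ) (a b : Euc d) (t : ℝ) :
    quadForm Q ((1 - t) • a + t • b) + t * (1 - t) * quadForm Q (b - a) =
      (1 - t) * quadForm Q a + t * quadForm Q b := by
  simp only [quadForm, PiLp.add_apply, PiLp.smul_apply, PiLp.sub_apply, smul_eq_mul,
    Finset.mul_sum, ← Finset.sum_add_distrib]
  exact Finset.sum_congr rfl fun i _ => Finset.sum_congr rfl fun i' _ => by ring

lemma quadForm_combo_le {Q : Matrix (Fin d) (Fin d) ℝ} (hQ : Q.PosSemidef) (a b : Euc d) {t : ℝ}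
    (ht₀ : 0 ≤ t) (ht₁ : t ≤ 1) :
    quadForm Q ((1 - t) • a + t • b) ≤ (1 - t) * quadForm Q a + t * quadForm Q b := by
  rw [← quadForm_combo_add_mul_sub]
  exact le_add_of_nonneg_right
    (mul_nonneg (mul_nonneg ht₀ (sub_nonneg.2 ht₁)) (quadForm_nonneg hQ _))

end QuadForm

section Calculus

variable {E : Type*} [NormedAddCommGroup E] [InnerProductSpace ℝ E] [CompleteSpace E] {f : E → ℝ}

lemma hasDerivAt_comp_add_smul {w δ : E} {t : ℝ} (hf : DifferentiableAt ℝ f (w + t • δ)) :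
    HasDerivAt (fun s : ℝ => f (w + s • δ)) ⟪gradient f (w + t • δ), δ⟫ t := by
  have hline : HasDerivAt (fun s : ℝ => w + s • δ) δ t := by
    simpa using ((hasDerivAt_id t).smul_const δ).const_add w
  rw [inner_gradient_left]
  exact hf.hasFDerivAt.comp_hasDerivAt t hline

lemma ConvexOn.add_inner_gradient_le (hf : ConvexOn ℝ univ f) {x : E}
    (hd : DifferentiableAt ℝ f x) (u : E) : f x + ⟪gradient f x, u - x⟫ ≤ f u := by
  have hline : ConvexOn ℝ univ fun s : ℝ => f (x + s • (u - x)) := by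
    simpa [Function.comp_def, AffineMap.lineMap_apply_module', add_comm] using
      hf.comp_affineMap (AffineMap.lineMap x u)
  have := hline.le_slope_of_hasDerivAt (mem_univ 0) (mem_univ 1) one_pos
    (hasDerivAt_comp_add_smul (by simpa using hd))
  rw [slope_def_field, sub_zero, div_one, zero_smul, add_zero, one_smul, add_sub_cancel] at this
  linarith

end Calculus

lemma sub_le_of_hasDerivAt_le_affine {φ φ' : ℝ → ℝ} {K₀ K₁ : ℝ}
    (hφ : ∀ t, HasDerivAt φ (φ' t) t) (hbound : ∀ t ∈ Ioo (0 : ℝ) 1, φ' t ≤ K₀ + K₁ * t) :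
    φ 1 - φ 0 ≤ K₀ + K₁ / 2 := by
  set ψ : ℝ → ℝ := fun t => K₀ * t + K₁ / 2 * t ^ 2 - φ t
  have hψ : ∀ t, HasDerivAt ψ (K₀ + K₁ * t - φ' t) t := fun t =>
    ((((hasDerivAt_id' t).const_mul K₀).add ((hasDerivAt_pow 2 t).const_mul (K₁ / 2))).sub
      (hφ t)).congr_deriv (by ring)
  have hmono : MonotoneOn ψ (Icc 0 1) := by
    refine monotoneOn_of_hasDerivWithinAt_nonneg (convex_Icc 0 1)
      (fun t _ => (hψ t).continuousAt.continuousWithinAt) (fun t _ => (hψ t).hasDerivWithinAt)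
      fun t ht => ?_
    rw [interior_Icc] at ht
    linarith [hbound t ht]
  have := hmono (left_mem_Icc.2 zero_le_one) (right_mem_Icc.2 zero_le_one) zero_le_one
  simp only [ψ] at this
  linarith

lemma real_inner_le_norm_sq_div_add {E : Type*} [NormedAddCommGroup E] [InnerProductSpace ℝ E]
    {L : ℝ} (hL : 0 < L) (a b : E) : ⟪a, b⟫ ≤ ‖a‖ ^ 2 / L + L / 4 * ‖b‖ ^ 2 := by
  have hsq : 0 ≤ (‖a‖ - L / 2 * ‖b‖) ^ 2 / L := by positivity
  have hid : (‖a‖ - L / 2 * ‖b‖) ^ 2 / L = ‖a‖ ^ 2 / L + L / 4 * ‖b‖ ^ 2 - ‖a‖ * ‖b‖ := by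
    field_simp; ring
  linarith [real_inner_le_norm a b]

section BlockLipschitz

variable {d m : ℕ} {blk : Fin d → Fin m} {f : Euc d → ℝ} {Q : Fin m → Matrix (Fin d) (Fin d) ℝ}

lemma bigL_sq : bigL blk Q ^ 2 = 2 * specNorm (Qtilde blk Q) :=
  Real.sq_sqrt (mul_nonneg zero_le_two (norm_nonneg _))

lemma BlockLip.inner_gradient_sub_le (hflip : BlockLip blk f Q) (hpsd : ∀ j, (Q j).PosSemidef)
    {L : ℝ} (hL : 0 < L) (x y : Euc d) (j : Fin m) {t : ℝ} (ht₀ : 0 ≤ t) (ht₁ : t ≤ 1) :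
    ⟪gradient f (blockCombine blk ((j : ℕ) + 1) x y + t • blockMask blk j (y - x)) - gradient f x,
        blockMask blk j (y - x)⟫ ≤
      ((1 - t) * quadForm (Q j) (maskGE blk ((j : ℕ) + 2) (y - x)) +
          t * quadForm (Q j) (maskGE blk ((j : ℕ) + 1) (y - x))) / L +
        L / 4 * ‖blockMask blk j (y - x)‖ ^ 2 := by
  set z := blockCombine blk ((j : ℕ) + 1) x y + t • blockMask blk j (y - x)
  have hz : z - x = (1 - t) • maskGE blk ((j : ℕ) + 2) (y - x) +
      t • maskGE blk ((j : ℕ) + 1) (y - x) := by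
    rw [← maskGE_add_blockMask, add_sub_right_comm, blockCombine_sub_left]
    module
  have hgrad : ‖blockMask blk j (gradient f z - gradient f x)‖ ^ 2 ≤
      (1 - t) * quadForm (Q j) (maskGE blk ((j : ℕ) + 2) (y - x)) +
        t * quadForm (Q j) (maskGE blk ((j : ℕ) + 1) (y - x)) := by
    rw [blockMask_sub]
    exact (hflip j z x).trans (hz ▸ quadForm_combo_le (hpsd j) _ _ ht₀ ht₁)
  rw [inner_blockMask_right]
  refine (real_inner_le_norm_sq_div_add hL _ _).trans ?_
  gcongr

lemma BlockLip.apply_blockCombine_le (hf : Differentiable ℝ f) (hflip : BlockLip blk f Q)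
    (hpsd : ∀ j, (Q j).PosSemidef) {L : ℝ} (hL : 0 < L) (x y : Euc d) (j : Fin m) :
    f (blockCombine blk j x y) ≤ f (blockCombine blk ((j : ℕ) + 1) x y) +
      ⟪gradient f x, blockMask blk j (y - x)⟫ +
      (quadForm (Q j) (maskGE blk ((j : ℕ) + 1) (y - x)) +
          quadForm (Q j) (maskGE blk ((j : ℕ) + 2) (y - x))) / (2 * L) +
      L / 4 * ‖blockMask blk j (y - x)‖ ^ 2 := by
  set δ := blockMask blk j (y - x)
  set w := blockCombine blk ((j : ℕ) + 1) x y
  set c₁ := quadForm (Q j) (maskGE blk ((j : ℕ) + 1) (y - x))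
  set c₂ := quadForm (Q j) (maskGE blk ((j : ℕ) + 2) (y - x))
  have hseg := sub_le_of_hasDerivAt_le_affine (φ := fun s => f (w + s • δ))
    (K₀ := ⟪gradient f x, δ⟫ + c₂ / L + L / 4 * ‖δ‖ ^ 2) (K₁ := (c₁ - c₂) / L)
    (fun t => hasDerivAt_comp_add_smul (hf _)) fun t ht => by
      have h := hflip.inner_gradient_sub_le hpsd hL x y j ht.1.le ht.2.le
      have hlin : ((1 - t) * c₂ + t * c₁) / L = c₂ / L + (c₁ - c₂) / L * t := by ring
      rw [inner_sub_left] at h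
      linarith
  have hend : w + (1 : ℝ) • δ = blockCombine blk j x y := by
    rw [one_smul, blockCombine_succ_add_blockMask]
  have hconst : c₂ / L + (c₁ - c₂) / L / 2 = (c₁ + c₂) / (2 * L) := by
    field_simp; ring
  simp only [hend, zero_smul, add_zero] at hseg
  linarith

lemma BlockLip.le_add_inner_add_sq (hf : Differentiable ℝ f) (hflip : BlockLip blk f Q)
    (hpsd : ∀ j, (Q j).PosSemidef) (hL : 0 < bigL blk Q) (x y : Euc d) :
    f y ≤ f x + ⟪gradient f x, y - x⟫ + bigL blk Q / 2 * ‖y - x‖ ^ 2 := by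
  set L := bigL blk Q
  have htele : f y - f x = ∑ j : Fin m,
      (f (blockCombine blk j x y) - f (blockCombine blk ((j : ℕ) + 1) x y)) := by
    rw [Fin.sum_univ_eq_sum_range (fun t => f (blockCombine blk t x y) -
      f (blockCombine blk (t + 1) x y)), Finset.sum_range_sub', blockCombine_zero,
      blockCombine_self_card]
  calc f y = f x + ∑ j : Fin m,
        (f (blockCombine blk j x y) - f (blockCombine blk ((j : ℕ) + 1) x y)) := by
        linarith
    _ ≤ f x + ∑ j : Fin m, (⟪gradient f x, blockMask blk j (y - x)⟫ +
        (quadForm (Q j) (maskGE blk ((j : ℕ) + 1) (y - x)) +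
          quadForm (Q j) (maskGE blk ((j : ℕ) + 2) (y - x))) / (2 * L) +
        L / 4 * ‖blockMask blk j (y - x)‖ ^ 2) := by
        gcongr with j
        linarith [hflip.apply_blockCombine_le hf hpsd hL x y j]
    _ = f x + ⟪gradient f x, y - x⟫ + quadForm (Qtilde blk Q) (y - x) / (2 * L) +
        L / 4 * ‖y - x‖ ^ 2 := by
        rw [Finset.sum_add_distrib, Finset.sum_add_distrib, ← inner_sum, sum_blockMask,
          ← Finset.sum_div, ← quadForm_Qtilde, ← Finset.mul_sum,
          ← norm_sq_eq_sum_norm_sq_blockMask]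
        ring
    _ ≤ f x + ⟪gradient f x, y - x⟫ + specNorm (Qtilde blk Q) * ‖y - x‖ ^ 2 / (2 * L) +
        L / 4 * ‖y - x‖ ^ 2 := by
        gcongr
        exact quadForm_le_specNorm _ _
    _ = f x + ⟪gradient f x, y - x⟫ + L / 2 * ‖y - x‖ ^ 2 := by
        rw [show specNorm (Qtilde blk Q) = L ^ 2 / 2 by rw [bigL_sq]; ring]
        field_simp
        ring

lemma BlockLip.norm_sq_gradient_sub_le (hflip : BlockLip blk f Q) (hpsd : ∀ j, (Q j).PosSemidef)
    {x y p : Euc d} (hp : ∀ j : Fin m, blockMask blk j p =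
      blockMask blk j (gradient f (blockCombine blk ((j : ℕ) + 1) x y))) :
    ‖gradient f x - p‖ ^ 2 ≤ specNorm (Qtilde blk Q) * ‖y - x‖ ^ 2 :=
  calc ‖gradient f x - p‖ ^ 2 = ∑ j : Fin m, ‖blockMask blk j (gradient f x) -
        blockMask blk j (gradient f (blockCombine blk ((j : ℕ) + 1) x y))‖ ^ 2 := by
        simp only [norm_sq_eq_sum_norm_sq_blockMask (blk := blk) (gradient f x - p),
          blockMask_sub, hp]
    _ ≤ ∑ j : Fin m, quadForm (Q j) (maskGE blk ((j : ℕ) + 2) (y - x)) := by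
        gcongr with j
        refine (hflip j _ _).trans_eq ?_
        rw [← neg_sub, blockCombine_sub_left, quadForm_neg]
    _ ≤ quadForm (Qtilde blk Q) (y - x) := by
        rw [quadForm_Qtilde]
        gcongr with j
        exact le_add_of_nonneg_left (quadForm_nonneg (hpsd j) _)
    _ ≤ specNorm (Qtilde blk Q) * ‖y - x‖ ^ 2 := quadForm_le_specNorm _ _

end BlockLipschitz

lemma ConvexOn.add_inner_sub_le_of_isMinOn_add_sq {E : Type*} [NormedAddCommGroup E]
    [InnerProductSpace ℝ E] {φ : E → ℝ} (hφ : ConvexOn ℝ univ φ) {c v : E}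
    (hv : IsMinOn (fun u => φ u + ‖u - c‖ ^ 2 / 2) univ v) (z : E) :
    φ v + ⟪c - v, z - v⟫ ≤ φ z := by
  set X := φ z - φ v - ⟪c - v, z - v⟫
  have hsmall : ∀ t ∈ Ioc (0 : ℝ) 1, 0 ≤ X + t / 2 * ‖z - v‖ ^ 2 := fun t ⟨ht₀, ht₁⟩ => by
    have hmin : φ v + ‖v - c‖ ^ 2 / 2 ≤ φ (v + t • (z - v)) + ‖v + t • (z - v) - c‖ ^ 2 / 2 :=
      hv (mem_univ _)
    have hconv : φ (v + t • (z - v)) ≤ (1 - t) * φ v + t * φ z := by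
      have := hφ.2 (mem_univ v) (mem_univ z) (sub_nonneg.2 ht₁) ht₀.le (by ring)
      rwa [show (1 - t) • v + t • z = v + t • (z - v) by module] at this
    have hsq : ‖v + t • (z - v) - c‖ ^ 2 =
        ‖v - c‖ ^ 2 - 2 * t * ⟪c - v, z - v⟫ + t ^ 2 * ‖z - v‖ ^ 2 := by
      rw [show v + t • (z - v) - c = (v - c) + t • (z - v) by abel, norm_add_sq_real,
        inner_smul_right, norm_smul, mul_pow, Real.norm_eq_abs, sq_abs, ← neg_sub c v,
        inner_neg_left]
      ring
    have : 0 ≤ t * (X + t / 2 * ‖z - v‖ ^ 2) := by nlinarith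
    exact nonneg_of_mul_nonneg_right this ht₀
  have hlim : Tendsto (fun t : ℝ => X + t / 2 * ‖z - v‖ ^ 2) (𝓝[>] 0) (𝓝 X) := by
    have : Continuous fun t : ℝ => X + t / 2 * ‖z - v‖ ^ 2 := by fun_prop
    simpa using (this.tendsto 0).mono_left nhdsWithin_le_nhds
  have : 0 ≤ X := ge_of_tendsto hlim
    (eventually_of_mem (Ioc_mem_nhdsGT zero_lt_one) hsmall)
  linarith

lemma SubgradStrongConvex.add_sq_le_of_isMinOn {d : ℕ} {γ : ℝ} {g : Euc d → ℝ}
    (hsc : SubgradStrongConvex γ g) (hg : ConvexOn ℝ univ g) {A : ℝ} (hA : 0 < A) {c v : Euc d}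
    (hv : IsMinOn (fun u => A * g u + ‖u - c‖ ^ 2 / 2) univ v) (u : Euc d) :
    A * g v + ‖v - c‖ ^ 2 / 2 + (1 + A * γ) / 2 * ‖u - v‖ ^ 2 ≤ A * g u + ‖u - c‖ ^ 2 / 2 := by
  have hsub : ∀ z, g v + ⟪A⁻¹ • (c - v), z - v⟫ ≤ g z := fun z => by
    have h := (hg.smul hA.le).add_inner_sub_le_of_isMinOn_add_sq hv z
    simp only [smul_eq_mul] at h
    calc g v + ⟪A⁻¹ • (c - v), z - v⟫ = A⁻¹ * (A * g v + ⟪c - v, z - v⟫) := by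
          rw [real_inner_smul_left]; field_simp
      _ ≤ A⁻¹ * (A * g z) := by gcongr
      _ = g z := by field_simp
  have hstrong : A * g v + ⟪c - v, u - v⟫ + A * γ / 2 * ‖u - v‖ ^ 2 ≤ A * g u :=
    calc _ = A * (g v + ⟪A⁻¹ • (c - v), u - v⟫ + γ / 2 * ‖u - v‖ ^ 2) := by
          rw [real_inner_smul_left]; field_simp
      _ ≤ A * g u := by gcongr; exact hsc v u _ hsub
  have hsq : ‖u - c‖ ^ 2 = ‖v - c‖ ^ 2 - 2 * ⟪c - v, u - v⟫ + ‖u - v‖ ^ 2 := by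
    rw [show u - c = (v - c) + (u - v) by abel, norm_add_sq_real, ← neg_sub c v, inner_neg_left]
    ring
  linarith

namespace ACoder

variable {d m : ℕ} {blk : Fin d → Fin m} {f g : Euc d → ℝ} {gj : Fin m → Euc d → ℝ}
  {Q : Fin m → Matrix (Fin d) (Fin d) ℝ} {γ : ℝ} (P : ACoder d m blk f g gj Q γ)

def modulus (k : ℕ) : ℝ := 1 + P.A k * γ

def blockErr (k : ℕ) : Euc d := gradient f (P.x k) - P.p k

def extrapErr (k : ℕ) : Euc d := P.q k - gradient f (P.x k)

/-- The estimate sequence `ψ_k`, whose minimizer is `v_k`. -/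
def estimate (k : ℕ) (u : Euc d) : ℝ :=
  ‖u - P.x0‖ ^ 2 / 2 + ∑ i ∈ Icc 1 k, P.a i * (f (P.x i) + ⟪P.q i, u - P.x i⟫) + P.A k * g u

def dissipation (k : ℕ) : ℝ :=
  ∑ i ∈ Icc 1 k, 3 / 10 * P.modulus (i - 1) * ‖P.v i - P.v (i - 1)‖ ^ 2

lemma A_succ (k : ℕ) : P.A (k + 1) = P.A k + P.a (k + 1) := P.hA (k + 1) k.succ_pos

lemma A_nonneg (k : ℕ) : 0 ≤ P.A k := by
  induction k with
  | zero => rw [P.hA0]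
  | succ k ih => rw [P.A_succ]; linarith [P.hapos (k + 1) k.succ_pos]

lemma A_pos_succ (k : ℕ) : 0 < P.A (k + 1) := by
  rw [P.A_succ]; linarith [P.A_nonneg k, P.hapos (k + 1) k.succ_pos]

lemma modulus_pos (k : ℕ) : 0 < P.modulus k := by
  unfold modulus; nlinarith [P.A_nonneg k, P.hγ]

lemma modulus_mono : Monotone P.modulus := monotone_nat_of_le_succ fun k => by
  unfold modulus; nlinarith [P.A_succ k, P.hapos (k + 1) k.succ_pos, P.hγ]

lemma bigL_mul_sq_le (k : ℕ) :
    bigL blk Q * P.a (k + 1) ^ 2 ≤ 2 / 5 * P.modulus k * P.A (k + 1) := by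
  have h := P.hstep (k + 1) k.succ_pos
  rw [Nat.add_sub_cancel, div_le_div_iff₀ (P.A_pos_succ k) (by linarith [P.hLpos])] at h
  unfold modulus
  nlinarith [P.hLpos]

lemma y_succ (k : ℕ) : P.y (k + 1) =
    (P.A k / P.A (k + 1)) • P.y k + (P.a (k + 1) / P.A (k + 1)) • P.v (k + 1) :=
  P.hy (k + 1) k.succ_pos

lemma x_succ (k : ℕ) : P.x (k + 1) =
    (P.A k / P.A (k + 1)) • P.y k + (P.a (k + 1) / P.A (k + 1)) • P.v k :=
  P.hx (k + 1) k.succ_pos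

lemma y_sub_x (k : ℕ) :
    P.y (k + 1) - P.x (k + 1) = (P.a (k + 1) / P.A (k + 1)) • (P.v (k + 1) - P.v k) := by
  rw [P.y_succ, P.x_succ]
  module

lemma A_smul_y_sub_x (k : ℕ) :
    P.A k • (P.y k - P.x (k + 1)) + P.a (k + 1) • (P.v (k + 1) - P.x (k + 1)) =
      P.A (k + 1) • (P.y (k + 1) - P.x (k + 1)) := by
  have hA : P.A k + P.a (k + 1) ≠ 0 := P.A_succ k ▸ (P.A_pos_succ k).ne'
  rw [P.y_succ, P.A_succ]
  simp only [smul_sub, smul_add, smul_smul, mul_div_cancel₀ _ hA, add_smul]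
  abel

lemma A_mul_g_y_succ_le (k : ℕ) :
    P.A (k + 1) * g (P.y (k + 1)) ≤ P.A k * g (P.y k) + P.a (k + 1) * g (P.v (k + 1)) := by
  have hA := P.A_pos_succ k
  have hw : P.A k / P.A (k + 1) + P.a (k + 1) / P.A (k + 1) = 1 := by
    rw [← add_div, ← P.A_succ, div_self hA.ne']
  have hconv := P.hgconv.2 (mem_univ (P.y k)) (mem_univ (P.v (k + 1)))
    (div_nonneg (P.A_nonneg k) hA.le) (div_nonneg (P.hapos (k + 1) k.succ_pos).le hA.le) hw
  rw [← P.y_succ] at hconv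
  calc P.A (k + 1) * g (P.y (k + 1))
      ≤ P.A (k + 1) * (P.A k / P.A (k + 1) * g (P.y k) +
          P.a (k + 1) / P.A (k + 1) * g (P.v (k + 1))) := by gcongr; exact hconv
    _ = P.A k * g (P.y k) + P.a (k + 1) * g (P.v (k + 1)) := by field_simp

lemma inner_q (k : ℕ) (w : Euc d) :
    ⟪P.q k, w⟫ = ⟪gradient f (P.x k), w⟫ + ⟪P.extrapErr k, w⟫ := by
  rw [← inner_add_left, extrapErr, add_sub_cancel]

lemma a_smul_extrapErr_succ (k : ℕ) :
    P.a (k + 1) • P.extrapErr (k + 1) =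
      P.a k • P.blockErr k - P.a (k + 1) • P.blockErr (k + 1) := by
  have hq : P.q (k + 1) =
      P.p (k + 1) + (P.a k / P.a (k + 1)) • (gradient f (P.x k) - P.p k) :=
    P.hq (k + 1) k.succ_pos
  rw [extrapErr, blockErr, blockErr, hq, smul_sub, smul_add, smul_smul,
    mul_div_cancel₀ _ (P.hapos (k + 1) k.succ_pos).ne']
  module

lemma sq_mul_norm_blockErr_le (k : ℕ) :
    (P.a (k + 1) * ‖P.blockErr (k + 1)‖) ^ 2 ≤
      2 / 25 * P.modulus k ^ 2 * ‖P.v (k + 1) - P.v k‖ ^ 2 := by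
  have hA := P.A_pos_succ k
  have hE := P.hflip.norm_sq_gradient_sub_le P.hpsd (P.hp (k + 1) k.succ_pos)
  rw [← blockErr, y_sub_x, norm_smul, mul_pow, Real.norm_eq_abs, sq_abs] at hE
  have hN : specNorm (Qtilde blk Q) = bigL blk Q ^ 2 / 2 := by rw [bigL_sq]; ring
  have hLa : 0 ≤ bigL blk Q * P.a (k + 1) ^ 2 := by have := P.hLpos; positivity
  calc (P.a (k + 1) * ‖P.blockErr (k + 1)‖) ^ 2
      ≤ P.a (k + 1) ^ 2 * (specNorm (Qtilde blk Q) *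
          ((P.a (k + 1) / P.A (k + 1)) ^ 2 * ‖P.v (k + 1) - P.v k‖ ^ 2)) := by
        rw [mul_pow]; gcongr
    _ = (bigL blk Q * P.a (k + 1) ^ 2) ^ 2 / (2 * P.A (k + 1) ^ 2) *
          ‖P.v (k + 1) - P.v k‖ ^ 2 := by
        rw [hN]; field_simp
    _ ≤ (2 / 5 * P.modulus k * P.A (k + 1)) ^ 2 / (2 * P.A (k + 1) ^ 2) *
          ‖P.v (k + 1) - P.v k‖ ^ 2 := by
        have := P.bigL_mul_sq_le k
        have := P.modulus_pos k
        gcongr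
    _ = 2 / 25 * P.modulus k ^ 2 * ‖P.v (k + 1) - P.v k‖ ^ 2 := by
        field_simp; ring

lemma inner_blockErr_le (k : ℕ) (w : Euc d) :
    P.a k * ⟪P.blockErr k, w⟫ ≤
      3 / 20 * P.modulus (k - 1) * (‖P.v k - P.v (k - 1)‖ ^ 2 + ‖w‖ ^ 2) := by
  have hσ := P.modulus_pos (k - 1)
  cases k with
  | zero => rw [P.ha0, zero_mul]; positivity
  | succ k =>
    rw [Nat.add_sub_cancel] at hσ ⊢
    set X := P.a (k + 1) * ‖P.blockErr (k + 1)‖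
    set D := ‖P.v (k + 1) - P.v k‖
    have hX : X ^ 2 ≤ 2 / 25 * P.modulus k ^ 2 * D ^ 2 := P.sq_mul_norm_blockErr_le k
    have hinner : P.a (k + 1) * ⟪P.blockErr (k + 1), w⟫ ≤ X * ‖w‖ := by
      rw [mul_assoc]
      exact mul_le_mul_of_nonneg_left (real_inner_le_norm _ _) (P.hapos (k + 1) k.succ_pos).le
    -- Young's inequality, in the form of a sum of squares
    have hyoung : 0 ≤ 20 * P.modulus k *
        (3 / 20 * P.modulus k * (D ^ 2 + ‖w‖ ^ 2) - X * ‖w‖) := by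
      nlinarith [sq_nonneg (15 * X - 4 * P.modulus k * ‖w‖), sq_nonneg (P.modulus k * ‖w‖)]
    linarith [nonneg_of_mul_nonneg_right hyoung (by positivity)]

lemma sum_extrapErr_add_blockErr_le (u : Euc d) (k : ℕ) :
    ∑ i ∈ Icc 1 k, P.a i * ⟪P.extrapErr i, u - P.v i⟫ + P.a k * ⟪P.blockErr k, u - P.v k⟫ ≤
      P.dissipation k - 3 / 20 * P.modulus (k - 1) * ‖P.v k - P.v (k - 1)‖ ^ 2 := by
  induction k with
  | zero => simp [dissipation, P.ha0]
  | succ k ih =>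
    have hε : P.a (k + 1) * ⟪P.extrapErr (k + 1), u - P.v (k + 1)⟫ =
        P.a k * ⟪P.blockErr k, u - P.v (k + 1)⟫ -
          P.a (k + 1) * ⟪P.blockErr (k + 1), u - P.v (k + 1)⟫ := by
      rw [← real_inner_smul_left, a_smul_extrapErr_succ, inner_sub_left, real_inner_smul_left,
        real_inner_smul_left]
    have hshift : P.a k * ⟪P.blockErr k, u - P.v (k + 1)⟫ - P.a k * ⟪P.blockErr k, u - P.v k⟫ =
        P.a k * ⟪P.blockErr k, P.v k - P.v (k + 1)⟫ := by
      rw [← mul_sub, ← inner_sub_right, sub_sub_sub_cancel_left]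
    have hE := P.inner_blockErr_le k (P.v k - P.v (k + 1))
    have hσ := mul_le_mul_of_nonneg_right (P.modulus_mono (Nat.sub_le k 1))
      (sq_nonneg ‖P.v (k + 1) - P.v k‖)
    rw [norm_sub_rev (P.v k) (P.v (k + 1))] at hE
    rw [dissipation] at ih ⊢
    rw [Finset.sum_Icc_succ_top (by omega), Finset.sum_Icc_succ_top (by omega), Nat.add_sub_cancel]
    linarith

lemma sum_extrapErr_le (u : Euc d) (k : ℕ) :
    ∑ i ∈ Icc 1 k, P.a i * ⟪P.extrapErr i, u - P.v i⟫ ≤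
      P.dissipation k + 3 / 20 * P.modulus (k - 1) * ‖u - P.v k‖ ^ 2 := by
  have hsum := P.sum_extrapErr_add_blockErr_le u k
  have hE := P.inner_blockErr_le k (P.v k - u)
  rw [← neg_sub u, inner_neg_right, norm_neg] at hE
  linarith

lemma estimate_zero (u : Euc d) : P.estimate 0 u = ‖u - P.x0‖ ^ 2 / 2 := by
  simp [estimate, P.hA0]

lemma estimate_succ (k : ℕ) (u : Euc d) : P.estimate (k + 1) u = P.estimate k u +
    P.a (k + 1) * (f (P.x (k + 1)) + ⟪P.q (k + 1), u - P.x (k + 1)⟫ + g u) := by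
  rw [estimate, estimate, Finset.sum_Icc_succ_top (by omega), P.A_succ]
  ring

lemma estimate_sub_estimate (k : ℕ) (u w : Euc d) :
    P.estimate k u - P.estimate k w =
      (P.A k * g u + ‖u - (P.x0 - ∑ i ∈ Icc 1 k, P.a i • P.q i)‖ ^ 2 / 2) -
        (P.A k * g w + ‖w - (P.x0 - ∑ i ∈ Icc 1 k, P.a i • P.q i)‖ ^ 2 / 2) := by
  set S := ∑ i ∈ Icc 1 k, P.a i • P.q i
  have hlin : ∑ i ∈ Icc 1 k, P.a i * (f (P.x i) + ⟪P.q i, u - P.x i⟫) -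
      ∑ i ∈ Icc 1 k, P.a i * (f (P.x i) + ⟪P.q i, w - P.x i⟫) = ⟪S, u - w⟫ := by
    rw [← Finset.sum_sub_distrib, sum_inner]
    refine Finset.sum_congr rfl fun i _ => ?_
    rw [real_inner_smul_left, show u - w = (u - P.x i) - (w - P.x i) by abel,
      inner_sub_right (P.q i) (u - P.x i)]
    ring
  have hsq : ∀ z, ‖z - (P.x0 - S)‖ ^ 2 = ‖z - P.x0‖ ^ 2 + 2 * ⟪S, z - P.x0⟫ + ‖S‖ ^ 2 := fun z => by
    rw [show z - (P.x0 - S) = (z - P.x0) + S by abel, norm_add_sq_real, real_inner_comm]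
  have hshift : ⟪S, u - P.x0⟫ - ⟪S, w - P.x0⟫ = ⟪S, u - w⟫ := by
    rw [← inner_sub_right, sub_sub_sub_cancel_right]
  rw [estimate, estimate, hsq, hsq]
  linarith

lemma estimate_growth (k : ℕ) (u : Euc d) :
    P.estimate k (P.v k) + P.modulus k / 2 * ‖u - P.v k‖ ^ 2 ≤ P.estimate k u := by
  cases k with
  | zero =>
    simp only [estimate_zero, modulus, P.hv0, P.hA0, sub_self, norm_zero]
    linarith
  | succ k =>
    have hmin := P.hgsc.add_sq_le_of_isMinOn P.hgconv (P.A_pos_succ k) (P.hv (k + 1) k.succ_pos) u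
    have hdiff := P.estimate_sub_estimate (k + 1) u (P.v (k + 1))
    unfold modulus
    linarith

lemma estimate_le (k : ℕ) (u : Euc d) :
    P.estimate k u ≤ ‖u - P.x0‖ ^ 2 / 2 + P.A k * (f u + g u) +
      ∑ i ∈ Icc 1 k, P.a i * ⟪P.extrapErr i, u - P.x i⟫ := by
  induction k with
  | zero => simp [estimate_zero, P.hA0]
  | succ k ih =>
    have hconv := mul_le_mul_of_nonneg_left
      (P.hfconv.add_inner_gradient_le (P.hfdiff (P.x (k + 1))) u) (P.hapos (k + 1) k.succ_pos).le
    rw [estimate_succ, inner_q, Finset.sum_Icc_succ_top (by omega), P.A_succ]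
    linarith

lemma A_mul_f_y_succ_le (k : ℕ) :
    P.A (k + 1) * f (P.y (k + 1)) ≤ P.A k * f (P.y k) +
      P.a (k + 1) * (f (P.x (k + 1)) + ⟪gradient f (P.x (k + 1)), P.v (k + 1) - P.x (k + 1)⟫) +
      P.modulus k / 5 * ‖P.v (k + 1) - P.v k‖ ^ 2 := by
  have hA := P.A_pos_succ k
  have hconv : f (P.x (k + 1)) + ⟪gradient f (P.x (k + 1)), P.y k - P.x (k + 1)⟫ ≤ f (P.y k) :=
    P.hfconv.add_inner_gradient_le (P.hfdiff _) _
  have hsmooth := P.hflip.le_add_inner_add_sq P.hfdiff P.hpsd P.hLpos (P.x (k + 1)) (P.y (k + 1))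
  have hinner : P.A k * ⟪gradient f (P.x (k + 1)), P.y k - P.x (k + 1)⟫ +
      P.a (k + 1) * ⟪gradient f (P.x (k + 1)), P.v (k + 1) - P.x (k + 1)⟫ =
      P.A (k + 1) * ⟪gradient f (P.x (k + 1)), P.y (k + 1) - P.x (k + 1)⟫ := by
    simp only [← real_inner_smul_right, ← inner_add_right, P.A_smul_y_sub_x]
  have hquad : P.A (k + 1) * (bigL blk Q / 2 * ‖P.y (k + 1) - P.x (k + 1)‖ ^ 2) ≤
      P.modulus k / 5 * ‖P.v (k + 1) - P.v k‖ ^ 2 := by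
    rw [y_sub_x, norm_smul, mul_pow, Real.norm_eq_abs, sq_abs]
    calc P.A (k + 1) * (bigL blk Q / 2 * ((P.a (k + 1) / P.A (k + 1)) ^ 2 *
          ‖P.v (k + 1) - P.v k‖ ^ 2))
        = bigL blk Q * P.a (k + 1) ^ 2 / (2 * P.A (k + 1)) * ‖P.v (k + 1) - P.v k‖ ^ 2 := by
          field_simp
      _ ≤ 2 / 5 * P.modulus k * P.A (k + 1) / (2 * P.A (k + 1)) *
          ‖P.v (k + 1) - P.v k‖ ^ 2 := by
          have := P.bigL_mul_sq_le k
          have := P.modulus_pos k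
          gcongr
      _ = P.modulus k / 5 * ‖P.v (k + 1) - P.v k‖ ^ 2 := by
          field_simp
  have hAk := mul_le_mul_of_nonneg_left hconv (P.A_nonneg k)
  have hAk1 := mul_le_mul_of_nonneg_left hsmooth hA.le
  rw [P.A_succ] at hAk1 hinner hquad ⊢
  linarith

lemma le_estimate_v (k : ℕ) :
    P.A k * (f (P.y k) + g (P.y k)) + ∑ i ∈ Icc 1 k, P.a i * ⟪P.extrapErr i, P.v i - P.x i⟫ +
      P.dissipation k ≤ P.estimate k (P.v k) := by
  induction k with
  | zero => simp [estimate_zero, dissipation, P.hA0, P.hv0]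
  | succ k ih =>
    have hgrow := P.estimate_growth k (P.v (k + 1))
    have hf := P.A_mul_f_y_succ_le k
    have hg := P.A_mul_g_y_succ_le k
    rw [dissipation] at ih ⊢
    rw [estimate_succ, inner_q, Finset.sum_Icc_succ_top (by omega), Finset.sum_Icc_succ_top (by omega),
      Nat.add_sub_cancel]
    linarith

lemma A_mul_sub_add_le (k : ℕ) (u : Euc d) :
    P.A (k + 1) * ((f (P.y (k + 1)) + g (P.y (k + 1))) - (f u + g u)) +
      3 / 10 * P.modulus k * ‖u - P.v (k + 1)‖ ^ 2 ≤ ‖u - P.x0‖ ^ 2 / 2 := by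
  have hv := P.le_estimate_v (k + 1)
  have hgrow := P.estimate_growth (k + 1) u
  have hle := P.estimate_le (k + 1) u
  have herr := P.sum_extrapErr_le u (k + 1)
  rw [Nat.add_sub_cancel] at herr
  have hsum : ∑ i ∈ Icc 1 (k + 1), P.a i * ⟪P.extrapErr i, u - P.x i⟫ -
      ∑ i ∈ Icc 1 (k + 1), P.a i * ⟪P.extrapErr i, P.v i - P.x i⟫ =
        ∑ i ∈ Icc 1 (k + 1), P.a i * ⟪P.extrapErr i, u - P.v i⟫ := by
    rw [← Finset.sum_sub_distrib]
    refine Finset.sum_congr rfl fun i _ => ?_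
    rw [← mul_sub, ← inner_sub_right, sub_sub_sub_cancel_right]
  have hσ := mul_le_mul_of_nonneg_right (P.modulus_mono (Nat.le_add_right k 1))
    (sq_nonneg ‖u - P.v (k + 1)‖)
  have hσ₀ := mul_nonneg (P.modulus_pos k).le (sq_nonneg ‖u - P.v (k + 1)‖)
  linarith

end ACoder

theorem stmt7_general {d m : ℕ} {blk : Fin d → Fin m} {f g : Euc d → ℝ}
    {gj : Fin m → Euc d → ℝ} {Q : Fin m → Matrix (Fin d) (Fin d) ℝ} {γ : ℝ}
    (P : ACoder d m blk f g gj Q γ) :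
    ∀ k : ℕ, 1 ≤ k →
      (∀ u : Euc d,
        (f (P.y k) + g (P.y k)) - (f u + g u)
            + 3 * (1 + P.A (k - 1) * γ) / (10 * P.A k) * ‖u - P.v k‖ ^ 2 ≤
          ‖u - P.x0‖ ^ 2 / (2 * P.A k)) ∧
      (∀ xs : Euc d, IsMinOn (fun z => f z + g z) Set.univ xs →
        (f (P.y k) + g (P.y k)) - (f xs + g xs) ≤ ‖xs - P.x0‖ ^ 2 / (2 * P.A k)) := by
  intro k hk
  obtain ⟨k, rfl⟩ := Nat.exists_eq_add_of_le' hk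
  rw [Nat.add_sub_cancel]
  have hA := P.A_pos_succ k
  have hσ := P.modulus_pos k
  have hgap : ∀ u : Euc d, (f (P.y (k + 1)) + g (P.y (k + 1))) - (f u + g u)
      + 3 * (1 + P.A k * γ) / (10 * P.A (k + 1)) * ‖u - P.v (k + 1)‖ ^ 2 ≤
        ‖u - P.x0‖ ^ 2 / (2 * P.A (k + 1)) := fun u => by
    have h := P.A_mul_sub_add_le k u
    unfold ACoder.modulus at h
    calc _ = (P.A (k + 1) * ((f (P.y (k + 1)) + g (P.y (k + 1))) - (f u + g u)) +
          3 / 10 * (1 + P.A k * γ) * ‖u - P.v (k + 1)‖ ^ 2) / P.A (k + 1) := by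
          field_simp
      _ ≤ ‖u - P.x0‖ ^ 2 / 2 / P.A (k + 1) := by gcongr
      _ = ‖u - P.x0‖ ^ 2 / (2 * P.A (k + 1)) := div_div _ _ _
  refine ⟨hgap, fun xs _ => ?_⟩
  have : 0 ≤ 3 * (1 + P.A k * γ) / (10 * P.A (k + 1)) * ‖xs - P.v (k + 1)‖ ^ 2 := by
    unfold ACoder.modulus at hσ; positivity
  linarith [hgap xs]

theorem stmt7 {d m : ℕ} {blk : Fin d → Fin m} {f g : Euc d → ℝ}
    {gj : Fin m → Euc d → ℝ} {Q : Fin m → Matrix (Fin d) (Fin d) ℝ} {γ : ℝ}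
    (P : ACoder d m blk f g gj Q γ)
    (hstepEq : ∀ k, 1 ≤ k →
      P.a k ^ 2 / P.A k = 2 * (1 + P.A (k - 1) * γ) / (5 * bigL blk Q)) :
    ∀ k : ℕ, 1 ≤ k →
      (∀ u : Euc d,
        (f (P.y k) + g (P.y k)) - (f u + g u)
            + 3 * (1 + P.A (k - 1) * γ) / (10 * P.A k) * ‖u - P.v k‖ ^ 2 ≤
          ‖u - P.x0‖ ^ 2 / (2 * P.A k)) ∧
      (∀ xs : Euc d, IsMinOn (fun z => f z + g z) Set.univ xs →
        (f (P.y k) + g (P.y k)) - (f xs + g xs) ≤ ‖xs - P.x0‖ ^ 2 / (2 * P.A k)) :=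
  stmt7_general P
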